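/- Let ν = ν(n) = √(2n+1) and define s_n = 2^{n+2} · n! · e^{n+1/2} / ( √π · ν^{2n+5/3} ). Then, as n → ∞, s_n − (2^{5/3}/n^{1/3})·( 1 − 5/(12ν²) − 23/(288ν⁴) ) = O( n^{−1/3} ν^{−6} ). -/

import Mathlib

open Real Filter Asymptotics

/-- `ν = √(2n+1)`, the classical turning point. -/
noncomputable def nu (n : ℕ) : ℝ := Real.sqrt (2 * n + 1)

/-- The prefactor `s_n = 2^{n+2} n! e^{n+1/2}/(√π ν^{2n+5/3})`, where
`ν^{2n+5/3} = (2n+1)^{n+5/6}`. -/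
noncomputable def prefactor (n : ℕ) : ℝ :=
  2 ^ (n + 2) * n.factorial * Real.exp ((n : ℝ) + 1 / 2) /
    (Real.sqrt π * (2 * (n : ℝ) + 1) ^ ((n : ℝ) + 5 / 6))

/-!
Write `s_n = 2^{5/3} n^{-1/3} e^{φ_n}` with `φ_n = 1/2 + r_n - (n + 5/6) log (1 + 1/(2n))`, where
`r_n = log (n! / (√(2πn) (n/e)^n))`. Telescoping the series for
`log stirlingSeq n - log stirlingSeq (n+1)`, keeping one term for the upper and two terms for the
lower estimate, gives `|r_n - 1/(12n)| ≤ 1/(360n³)`. In the variable `y = 1/(2n)`, for which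
`ν² = (1+y)/y`, this makes `φ_n = -5y/12 + y²/4 + O(y³)`, and the second-order Taylor polynomial
of `exp` at that point agrees with `1 - 5/(12ν²) - 23/(288ν⁴)` up to `O(y³) = O(ν⁻⁶)`.
-/

open Topology Stirling

lemma abs_exp_sub_quadratic_le {a b : ℝ} (hb : |b| ≤ 1) (hab : |a - b| ≤ 1) :
    |exp a - (1 + b + b ^ 2 / 2)| ≤ 6 * |a - b| + |b| ^ 3 := by
  have hshift : |exp a - exp b| ≤ 6 * |a - b| := by
    have hexp_b : exp b ≤ 3 :=
      (exp_le_exp.2 (abs_le.1 hb).2).trans exp_one_lt_three.le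
    calc |exp a - exp b| = exp b * |exp (a - b) - 1| := by
          rw [← abs_of_pos (exp_pos b), ← abs_mul, mul_sub, ← exp_add, abs_of_pos (exp_pos b)]
          ring_nf
      _ ≤ 3 * (2 * |a - b|) :=
          mul_le_mul hexp_b (abs_exp_sub_one_le hab) (abs_nonneg _) (by norm_num)
      _ = 6 * |a - b| := by ring
  have htaylor : |exp b - (1 + b + b ^ 2 / 2)| ≤ |b| ^ 3 := by
    have h := Real.exp_bound hb (n := 3) (by norm_num)
    norm_num [Finset.sum_range_succ, Nat.factorial] at h
    calc |exp b - (1 + b + b ^ 2 / 2)| ≤ |b| ^ 3 * (2 / 9) := by convert h using 2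
      _ ≤ |b| ^ 3 := by nlinarith [pow_nonneg (abs_nonneg b) 3]
  calc |exp a - (1 + b + b ^ 2 / 2)| ≤ |exp a - exp b| + |exp b - (1 + b + b ^ 2 / 2)| :=
        abs_sub_le _ _ _
    _ ≤ 6 * |a - b| + |b| ^ 3 := add_le_add hshift htaylor

lemma abs_log_one_add_sub_cubic_le {y : ℝ} (hy₀ : 0 ≤ y) (hy : y ≤ 1 / 2) :
    |log (1 + y) - (y - y ^ 2 / 2 + y ^ 3 / 3)| ≤ 2 * y ^ 4 := by
  have h := abs_log_sub_add_sum_range_le (x := -y) (by rw [abs_neg, abs_of_nonneg hy₀]; linarith) 3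
  rw [abs_neg, abs_of_nonneg hy₀, sub_neg_eq_add] at h
  calc |log (1 + y) - (y - y ^ 2 / 2 + y ^ 3 / 3)| ≤ y ^ 4 / (1 - y) := by
        convert h using 2; simp [Finset.sum_range_succ]; ring
    _ ≤ 2 * y ^ 4 := by
        rw [div_le_iff₀ (by linarith)]
        nlinarith [pow_nonneg hy₀ 4]

lemma abs_exp_sub_expansion_le {y r : ℝ} (hy₀ : 0 < y) (hy : y ≤ 1 / 2)
    (hr : |r - y / 6| ≤ y ^ 3 / 45) :
    |exp (1 / 2 + r - (1 / (2 * y) + 5 / 6) * log (1 + y)) -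
      (1 - 5 * y / (12 * (1 + y)) - 23 * y ^ 2 / (288 * (1 + y) ^ 2))| ≤ 20 * y ^ 3 := by
  have hy₃ : y ^ 3 ≤ 1 / 8 := by
    calc y ^ 3 ≤ (1 / 2) ^ 3 := pow_le_pow_left₀ hy₀.le hy 3
      _ = 1 / 8 := by norm_num
  set E := 1 / 2 + r - (1 / (2 * y) + 5 / 6) * log (1 + y)
  set P := 1 - 5 * y / (12 * (1 + y)) - 23 * y ^ 2 / (288 * (1 + y) ^ 2)
  -- the expansion of `E` to second order in `y`
  set M := -5 * y / 12 + y ^ 2 / 4 with hM_def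
  set R := log (1 + y) - (y - y ^ 2 / 2 + y ^ 3 / 3)
  have hEM : |E - M| ≤ 3 * y ^ 3 := by
    have hsplit : E - M = (r - y / 6) - 5 * y ^ 3 / 18 - (1 / (2 * y) + 5 / 6) * R := by
      simp only [E, M, R]
      field_simp
      ring
    have hR : |(1 / (2 * y) + 5 / 6) * R| ≤ (1 / (2 * y) + 5 / 6) * (2 * y ^ 4) := by
      rw [abs_mul, abs_of_pos (by positivity)]
      exact mul_le_mul_of_nonneg_left (abs_log_one_add_sub_cubic_le hy₀.le hy) (by positivity)
    have hR_eq : (1 / (2 * y) + 5 / 6) * (2 * y ^ 4) = y ^ 3 + 5 / 3 * y ^ 4 := by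
      field_simp
      ring
    rw [hsplit]
    calc |(r - y / 6) - 5 * y ^ 3 / 18 - (1 / (2 * y) + 5 / 6) * R|
        ≤ |r - y / 6| + 5 * y ^ 3 / 18 + |(1 / (2 * y) + 5 / 6) * R| := by
          have := abs_sub (r - y / 6 - 5 * y ^ 3 / 18) ((1 / (2 * y) + 5 / 6) * R)
          have := abs_sub (r - y / 6) (5 * y ^ 3 / 18)
          rw [abs_of_pos (by positivity : (0 : ℝ) < 5 * y ^ 3 / 18)] at this
          linarith
      _ ≤ 3 * y ^ 3 := by nlinarith [pow_pos hy₀ 3]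
  have hM : |M| ≤ y := by
    rw [abs_le]
    constructor <;> nlinarith [hM_def]
  have hquadratic : |1 + M + M ^ 2 / 2 - P| ≤ y ^ 3 / 4 := by
    have hq : 1 + M + M ^ 2 / 2 - P =
        y ^ 3 * (44 + 46 * y - 12 * y ^ 2 + 9 * y ^ 3) / (288 * (1 + y) ^ 2) := by
      simp only [M, P]
      field_simp
      ring
    have hnum₀ : 0 ≤ 44 + 46 * y - 12 * y ^ 2 + 9 * y ^ 3 := by nlinarith
    have hnum₁ : 44 + 46 * y - 12 * y ^ 2 + 9 * y ^ 3 ≤ 72 * (1 + y) ^ 2 := by nlinarith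
    rw [hq, abs_of_nonneg (by positivity), div_le_iff₀ (by positivity)]
    nlinarith [mul_le_mul_of_nonneg_left hnum₁ (pow_pos hy₀ 3).le]
  calc |exp E - P| ≤ |exp E - (1 + M + M ^ 2 / 2)| + |1 + M + M ^ 2 / 2 - P| := abs_sub_le _ _ _
    _ ≤ 6 * |E - M| + |M| ^ 3 + y ^ 3 / 4 := by
        gcongr
        exact abs_exp_sub_quadratic_le (by linarith) (by linarith)
    _ ≤ 6 * (3 * y ^ 3) + y ^ 3 + y ^ 3 / 4 := by gcongr
    _ ≤ 20 * y ^ 3 := by linarith [pow_pos hy₀ 3]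

lemma le_sub_of_tendsto_of_sdiff_le {u g : ℕ → ℝ} {L : ℝ} (hu : Tendsto u atTop (𝓝 L))
    (hg : Tendsto g atTop (𝓝 0)) (hstep : ∀ k, g k - g (k + 1) ≤ u k - u (k + 1)) (n : ℕ) :
    g n ≤ u n - L := by
  have hanti : Antitone (u - g) := antitone_nat_of_succ_le fun k => by
    simp only [Pi.sub_apply]
    linarith [hstep k]
  have h := hanti.le_of_tendsto (by simpa using hu.sub hg : Tendsto (fun k => u k - g k) atTop _) n
  simp only [Pi.sub_apply] at h
  linarith

lemma log_stirlingSeq_sdiff_ge {n : ℕ} (hn : n ≠ 0) :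
    (1 / (12 * n) - 1 / (360 * n ^ 3)) - (1 / (12 * (n + 1)) - 1 / (360 * (n + 1) ^ 3)) ≤
      log (stirlingSeq n) - log (stirlingSeq (n + 1)) := by
  obtain ⟨m, rfl⟩ := Nat.exists_eq_succ_of_ne_zero hn
  have h := sum_le_hasSum (Finset.range 2) (fun k _ => by positivity)
    (log_stirlingSeq_sdiff_hasSum m)
  norm_num [Finset.sum_range_succ] at h
  refine le_trans ?_ h
  push_cast
  set a : ℝ := m + 1
  have ha : 0 < a := by positivity
  rw [← sub_nonneg]
  have hdiff : 1 / 3 * ((2 * a + 1) ^ 2)⁻¹ + 1 / 5 * (((2 * a + 1) ^ 2) ^ 2)⁻¹ -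
      (1 / (12 * a) - 1 / (360 * a ^ 3) - (1 / (12 * (a + 1)) - 1 / (360 * (a + 1) ^ 3))) =
      (10 * a ^ 4 + 20 * a ^ 3 + 21 * a ^ 2 + 11 * a + 1) /
        (360 * a ^ 3 * (a + 1) ^ 3 * (2 * a + 1) ^ 4) := by
    field_simp
    ring
  rw [hdiff]
  positivity

lemma abs_log_stirlingSeq_sub_log_sqrt_pi_sub_le {n : ℕ} (hn : n ≠ 0) :
    |log (stirlingSeq n) - log √π - 1 / (12 * n)| ≤ 1 / (360 * n ^ 3) := by
  obtain ⟨m, rfl⟩ := Nat.exists_eq_succ_of_ne_zero hn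
  have hlim : Tendsto (fun k : ℕ => log (stirlingSeq (k + 1))) atTop (𝓝 (log √π)) :=
    ((continuousAt_log (by positivity)).tendsto).comp
      (tendsto_stirlingSeq_sqrt_pi.comp (tendsto_add_atTop_nat 1))
  have hinv := tendsto_one_div_add_atTop_nhds_zero_nat (𝕜 := ℝ)
  have hstep_upper (k : ℕ) : log (stirlingSeq (k + 1)) - log (stirlingSeq (k + 1 + 1)) ≤
      1 / (12 * ((k : ℝ) + 1)) - 1 / (12 * ((k : ℝ) + 1 + 1)) := by
    have := log_stirlingSeq_sdiff_le (k + 1)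
    push_cast at this
    convert this using 1
    field_simp
    ring
  have hstep_lower (k : ℕ) :
      1 / (12 * ((k : ℝ) + 1)) - 1 / (360 * ((k : ℝ) + 1) ^ 3) -
        (1 / (12 * ((k : ℝ) + 1 + 1)) - 1 / (360 * ((k : ℝ) + 1 + 1) ^ 3)) ≤
      log (stirlingSeq (k + 1)) - log (stirlingSeq (k + 1 + 1)) := by
    exact_mod_cast log_stirlingSeq_sdiff_ge k.succ_ne_zero
  have hupper := le_sub_of_tendsto_of_sdiff_le hlim.neg
    (g := fun k => -(1 / (12 * ((k : ℝ) + 1))))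
    (by convert (hinv.const_mul (1 / 12)).neg using 2 <;> simp [field])
    (fun k => by push_cast; linarith [hstep_upper k]) m
  have hlower := le_sub_of_tendsto_of_sdiff_le hlim
    (g := fun k => 1 / (12 * ((k : ℝ) + 1)) - 1 / (360 * ((k : ℝ) + 1) ^ 3))
    (by convert (hinv.const_mul (1 / 12)).sub ((hinv.pow 3).const_mul (1 / 360)) using 2 <;>
      simp [field])
    (fun k => by push_cast; linarith [hstep_lower k]) m
  push_cast
  rw [abs_le]
  constructor <;> linarith

lemma nu_nonneg (n : ℕ) : 0 ≤ nu n := sqrt_nonneg _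

lemma nu_sq (n : ℕ) : nu n ^ 2 = 2 * n + 1 := sq_sqrt (by positivity)

noncomputable def prefactorExponent (n : ℕ) : ℝ :=
  1 / 2 + (log (stirlingSeq n) - log √π) - ((n : ℝ) + 5 / 6) * log (1 + 1 / (2 * n))

lemma prefactor_eq {n : ℕ} (hn : n ≠ 0) :
    prefactor n = 2 ^ ((5 : ℝ) / 3) / (n : ℝ) ^ ((1 : ℝ) / 3) * exp (prefactorExponent n) := by
  have hn₀ : (0 : ℝ) < n := by positivity
  have hlog_factorial :
      log n.factorial = log (stirlingSeq n) + (log 2 + log n) / 2 + n * (log n - 1) := by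
    rw [log_stirlingSeq_formula, log_mul two_ne_zero hn₀.ne', log_div hn₀.ne' (exp_ne_zero 1),
      log_exp]
    ring
  have hlog_turning : log (2 * n + 1) = log 2 + log n + log (1 + 1 / (2 * n)) := by
    rw [← log_mul two_ne_zero hn₀.ne', ← log_mul (by positivity) (by positivity)]
    congr 1
    field_simp
  refine log_injOn_pos (Set.mem_Ioi.2 (by unfold prefactor; positivity))
    (Set.mem_Ioi.2 (by positivity)) ?_
  simp (disch := positivity) only [prefactor, prefactorExponent, log_div, log_mul, log_pow,
    log_exp, log_rpow, log_sqrt, hlog_factorial, hlog_turning]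
  push_cast
  ring

lemma abs_exp_prefactorExponent_sub_le {n : ℕ} (hn : n ≠ 0) :
    |exp (prefactorExponent n) - (1 - 5 / (12 * nu n ^ 2) - 23 / (288 * nu n ^ 4))| ≤
      68 * nu n ^ (-(6 : ℝ)) := by
  have hn₁ : (1 : ℝ) ≤ n := by exact_mod_cast Nat.one_le_iff_ne_zero.2 hn
  set y : ℝ := 1 / (2 * n) with hy_def
  have hy₀ : 0 < y := by positivity
  have hy : y ≤ 1 / 2 := by
    rw [hy_def, div_le_div_iff₀ (by positivity) (by norm_num)]
    linarith
  have hn_eq : (n : ℝ) = 1 / (2 * y) := by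
    rw [hy_def]
    field_simp
  have hnu_sq : nu n ^ 2 = (1 + y) / y := by
    rw [nu_sq, hn_eq]
    field_simp
  have hnu_six : nu n ^ (-(6 : ℝ)) = (y / (1 + y)) ^ 3 := by
    rw [rpow_neg (nu_nonneg n), show (6 : ℝ) = (6 : ℕ) by norm_num, rpow_natCast,
      show 6 = 2 * 3 by rfl, pow_mul, hnu_sq]
    field_simp
  have hstirling : |(log (stirlingSeq n) - log √π) - y / 6| ≤ y ^ 3 / 45 := by
    have h := abs_log_stirlingSeq_sub_log_sqrt_pi_sub_le hn
    rwa [show 1 / (12 * (n : ℝ)) = y / 6 by rw [hy_def]; ring,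
      show 1 / (360 * (n : ℝ) ^ 3) = y ^ 3 / 45 by rw [hy_def]; ring] at h
  have hy_ratio : 2 * y / 3 ≤ y / (1 + y) := by
    rw [div_le_div_iff₀ (by norm_num) (by positivity)]
    nlinarith
  calc |exp (prefactorExponent n) - (1 - 5 / (12 * nu n ^ 2) - 23 / (288 * nu n ^ 4))|
      = |exp (1 / 2 + (log (stirlingSeq n) - log √π) - (1 / (2 * y) + 5 / 6) * log (1 + y)) -
          (1 - 5 * y / (12 * (1 + y)) - 23 * y ^ 2 / (288 * (1 + y) ^ 2))| := by
        rw [prefactorExponent, show nu n ^ 4 = (nu n ^ 2) ^ 2 by ring, hnu_sq, ← hy_def, ← hn_eq]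
        congr 3 <;> field_simp
    _ ≤ 20 * y ^ 3 := abs_exp_sub_expansion_le hy₀ hy hstirling
    _ ≤ 68 * (y / (1 + y)) ^ 3 := by
        have := pow_le_pow_left₀ (by positivity) hy_ratio 3
        nlinarith [pow_pos hy₀ 3]
    _ = 68 * nu n ^ (-(6 : ℝ)) := by rw [hnu_six]

lemma exp_prefactorExponent_sub_isBigO :
    (fun n : ℕ => exp (prefactorExponent n) - (1 - 5 / (12 * nu n ^ 2) - 23 / (288 * nu n ^ 4)))
      =O[atTop] fun n : ℕ => nu n ^ (-(6 : ℝ)) := by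
  refine IsBigO.of_bound 68 ?_
  filter_upwards [eventually_ne_atTop 0] with n hn
  rw [norm_eq_abs, norm_eq_abs, abs_of_nonneg (rpow_nonneg (nu_nonneg n) _)]
  exact abs_exp_prefactorExponent_sub_le hn

lemma const_div_rpow_one_third_isBigO (c : ℝ) :
    (fun n : ℕ => c / (n : ℝ) ^ ((1 : ℝ) / 3)) =O[atTop] fun n : ℕ => (n : ℝ) ^ (-(1 : ℝ) / 3) := by
  simp_rw [neg_div, rpow_neg (Nat.cast_nonneg _), div_eq_mul_inv]
  exact (isBigO_refl _ _).const_mul_left c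

theorem prefactor_expansion :
    (fun n : ℕ => prefactor n - (2 : ℝ) ^ ((5 : ℝ) / 3) / (n : ℝ) ^ ((1 : ℝ) / 3) *
        (1 - 5 / (12 * nu n ^ 2) - 23 / (288 * nu n ^ 4)))
      =O[atTop] fun n : ℕ => (n : ℝ) ^ (-(1 : ℝ) / 3) * nu n ^ (-(6 : ℝ)) := by
  have hcoeff := const_div_rpow_one_third_isBigO (2 ^ ((5 : ℝ) / 3))
  refine (hcoeff.mul exp_prefactorExponent_sub_isBigO).congr' ?_ EventuallyEq.rfl
  filter_upwards [eventually_ne_atTop 0] with n hn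
  rw [prefactor_eq hn, mul_sub]
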